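/- Let μ, μ' ∈ R^d with ‖μ‖ = ‖μ'‖, and let P_θ denote the equal-weights mixture (1/2)N(-μ/2, σ²I) + (1/2)N(μ/2, σ²I), and P_{θ'} the analogous mixture with μ'. Set ξ = ‖μ‖/(2σ) and cos β = |μᵀμ'|/‖μ‖². Then KL(P_θ, P_{θ'}) ≤ ξ⁴(1 - cos β). -/

import Mathlib

/-!
With `w = (2σ²)⁻¹ • μ`, completing the square gives `mixDen σ μ x = c(‖μ‖) φ(x) cosh ⟪x, w⟫`
with `φ` the centred Gaussian density, so the log-likelihood ratio is
`log cosh ⟪x, w⟫ - log cosh ⟪x, w'⟫`. Translating each mixture component to the origin and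
moving `w'` onto `w` by a reflection (which preserves `φ`), the divergence becomes
`E[L(s + α) + L(s - α) - L(s + γ) - L(s - γ)] / 2` with `s = ⟪Y, w⟫`, `Y ~ φ`,
`L = log cosh`, `α = ‖μ‖² / (4σ²) = ξ²` and `γ = ⟪μ, μ'⟫ / (4σ²)`. Since
`L(s + a) + L(s - a) = log (cosh² s + sinh² a)` and `a² / 2 - L a` increases with `|a|`,
the integrand is at most `α² - γ²`, which gives `ξ⁴ (1 - cos² β) / 2 ≤ ξ⁴ (1 - cos β)`.
-/

open MeasureTheory Real

variable {d : ℕ}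

/-- Density of `N(m, σ² I_d)` on `ℝ^d`. -/
noncomputable def gaussDen (σ : ℝ) (m x : EuclideanSpace ℝ (Fin d)) : ℝ :=
  (2 * Real.pi * σ ^ 2) ^ (-(d : ℝ) / 2) * Real.exp (-‖x - m‖ ^ 2 / (2 * σ ^ 2))

/-- Density of the symmetric mixture `(1/2) N(-μ/2, σ²I) + (1/2) N(μ/2, σ²I)`. -/
noncomputable def mixDen (σ : ℝ) (μ : EuclideanSpace ℝ (Fin d)) (x : EuclideanSpace ℝ (Fin d)) : ℝ :=
  1 / 2 * gaussDen σ (-((1 / 2 : ℝ) • μ)) x + 1 / 2 * gaussDen σ ((1 / 2 : ℝ) • μ) x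

open scoped RealInnerProductSpace

noncomputable def logCosh (t : ℝ) : ℝ := log (cosh t)

lemma logCosh_nonneg (t : ℝ) : 0 ≤ logCosh t := log_nonneg (one_le_cosh t)

lemma logCosh_le_cosh (t : ℝ) : logCosh t ≤ cosh t :=
  (log_le_sub_one_of_pos (cosh_pos t)).trans (sub_le_self _ zero_le_one)

lemma logCosh_abs (t : ℝ) : logCosh |t| = logCosh t := by rw [logCosh, cosh_abs, logCosh]

lemma Real.cosh_add_mul_cosh_sub (x y : ℝ) :
    cosh (x + y) * cosh (x - y) = cosh x ^ 2 + sinh y ^ 2 := by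
  rw [cosh_add, cosh_sub]
  linear_combination sinh y ^ 2 * cosh_sq x + cosh x ^ 2 * cosh_sq y

lemma Real.sinh_le_mul_cosh {t : ℝ} (ht : 0 ≤ t) : sinh t ≤ t * cosh t := by
  have hderiv (x : ℝ) :
      HasDerivAt (fun y => y * cosh y - sinh y) (x * sinh x) x :=
    (((hasDerivAt_id x).mul (hasDerivAt_cosh x)).sub (hasDerivAt_sinh x)).congr_deriv
      (by simp only [id]; ring)
  have hmono : Monotone (fun y => y * cosh y - sinh y) :=
    monotone_of_deriv_nonneg (fun x => (hderiv x).differentiableAt) fun x => by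
      rw [(hderiv x).deriv]
      rcases le_total 0 x with hx | hx
      · exact mul_nonneg hx (sinh_nonneg_iff.2 hx)
      · exact mul_nonneg_of_nonpos_of_nonpos hx (sinh_nonpos_iff.2 hx)
  simpa using hmono ht

lemma logCosh_sub_logCosh_le {α β : ℝ} (h : |β| ≤ |α|) :
    logCosh α - logCosh β ≤ (α ^ 2 - β ^ 2) / 2 := by
  have hderiv (x : ℝ) :
      HasDerivAt (fun y => y ^ 2 / 2 - logCosh y) (x - sinh x / cosh x) x :=
    (((hasDerivAt_pow 2 x).div_const 2).sub
      ((hasDerivAt_cosh x).log (cosh_pos x).ne')).congr_deriv (by push_cast; ring)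
  have hmono : MonotoneOn (fun y => y ^ 2 / 2 - logCosh y) (Set.Ici 0) := by
    refine monotoneOn_of_deriv_nonneg (convex_Ici 0)
      (fun x _ => (hderiv x).continuousAt.continuousWithinAt)
      (fun x _ => (hderiv x).differentiableAt.differentiableWithinAt) fun x hx => ?_
    rw [interior_Ici, Set.mem_Ioi] at hx
    rw [(hderiv x).deriv, sub_nonneg, div_le_iff₀ (cosh_pos x)]
    exact sinh_le_mul_cosh hx.le
  have := hmono (abs_nonneg β) ((abs_nonneg β).trans h) h
  simp only [sq_abs, logCosh_abs] at this
  linarith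

lemma logCosh_add_add_logCosh_sub_le (s : ℝ) {α β : ℝ} (h : |β| ≤ |α|) :
    logCosh (s + α) + logCosh (s - α) - (logCosh (s + β) + logCosh (s - β)) ≤ α ^ 2 - β ^ 2 := by
  have hpair (a : ℝ) : logCosh (s + a) + logCosh (s - a) = log (cosh s ^ 2 + sinh a ^ 2) := by
    rw [logCosh, logCosh, ← log_mul (cosh_pos _).ne' (cosh_pos _).ne', cosh_add_mul_cosh_sub]
  have hsq (a : ℝ) : 2 * logCosh a = log (1 + sinh a ^ 2) := by
    rw [logCosh, ← cosh_sq', log_pow]; push_cast; ring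
  have hC : 1 ≤ cosh s ^ 2 := one_le_pow₀ (one_le_cosh s)
  have hS : sinh β ^ 2 ≤ sinh α ^ 2 := by
    nlinarith [cosh_le_cosh.2 h, cosh_sq α, cosh_sq β, cosh_pos β]
  -- cross-multiplying, this is `(cosh² s - 1) (sinh² β - sinh² α) ≤ 0`
  have hratio : log (cosh s ^ 2 + sinh α ^ 2) - log (cosh s ^ 2 + sinh β ^ 2)
      ≤ log (1 + sinh α ^ 2) - log (1 + sinh β ^ 2) := by
    rw [← log_div (by positivity) (by positivity), ← log_div (by positivity) (by positivity)]
    refine log_le_log (by positivity) ?_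
    rw [div_le_div_iff₀ (by positivity) (by positivity)]
    nlinarith [sq_nonneg (sinh β)]
  rw [hpair, hpair]
  linarith [logCosh_sub_logCosh_le h, hsq α, hsq β]

theorem integral_comp_norm_inner_eq_of_norm_eq {V G : Type*} [NormedAddCommGroup V]
    [InnerProductSpace ℝ V] [FiniteDimensional ℝ V] [MeasurableSpace V] [BorelSpace V]
    [NormedAddCommGroup G] [NormedSpace ℝ G] (F : ℝ → ℝ → G) {v w : V} (h : ‖v‖ = ‖w‖) :
    ∫ y, F ‖y‖ ⟪y, v⟫ = ∫ y, F ‖y‖ ⟪y, w⟫ := by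
  let R := Submodule.reflection (ℝ ∙ (v - w))ᗮ
  have hR : R v = w := Submodule.reflection_sub h
  rw [← R.measurePreserving.integral_comp R.toHomeomorph.measurableEmbedding
    (fun y => F ‖y‖ ⟪y, w⟫)]
  simp only [← hR, LinearIsometryEquiv.norm_map, LinearIsometryEquiv.inner_map_map]

lemma abs_inner_le_norm_sq_of_norm_eq {V : Type*} [NormedAddCommGroup V] [InnerProductSpace ℝ V]
    {v w : V} (h : ‖v‖ = ‖w‖) : |⟪v, w⟫| ≤ ‖v‖ ^ 2 :=
  (abs_real_inner_le_norm v w).trans_eq (by rw [← h, sq])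

lemma inner_half_smul_inv_smul {V : Type*} [NormedAddCommGroup V] [InnerProductSpace ℝ V]
    (σ : ℝ) (v w : V) : ⟪(1 / 2 : ℝ) • v, (2 * σ ^ 2)⁻¹ • w⟫ = ⟪v, w⟫ / (4 * σ ^ 2) := by
  rw [real_inner_smul_left, real_inner_smul_right]
  ring

lemma gaussDen_eq_gaussDen_zero (σ : ℝ) (m x : EuclideanSpace ℝ (Fin d)) :
    gaussDen σ m x = gaussDen σ 0 (x - m) := by
  rw [gaussDen, gaussDen, sub_zero]

lemma gaussDen_pos {σ : ℝ} (hσ : σ ≠ 0) (m x : EuclideanSpace ℝ (Fin d)) : 0 < gaussDen σ m x :=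
  mul_pos (rpow_pos_of_pos (by positivity) _) (exp_pos _)

lemma integral_gaussDen {σ : ℝ} (hσ : σ ≠ 0) (m : EuclideanSpace ℝ (Fin d)) :
    ∫ x, gaussDen σ m x = 1 := by
  simp_rw [gaussDen_eq_gaussDen_zero σ m]
  rw [integral_sub_right_eq_self (fun x => gaussDen σ 0 x) m]
  simp only [gaussDen, sub_zero]
  rw [integral_const_mul]
  have hexp (x : EuclideanSpace ℝ (Fin d)) :
      -‖x‖ ^ 2 / (2 * σ ^ 2) = -(2 * σ ^ 2)⁻¹ * ‖x‖ ^ 2 := by ring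
  simp_rw [hexp]
  rw [GaussianFourier.integral_rexp_neg_mul_sq_norm (by positivity), finrank_euclideanSpace_fin,
    div_inv_eq_mul, show π * (2 * σ ^ 2) = 2 * π * σ ^ 2 by ring, neg_div,
    rpow_neg (by positivity)]
  exact inv_mul_cancel₀ (by positivity)

lemma integrable_gaussDen {σ : ℝ} (hσ : σ ≠ 0) (m : EuclideanSpace ℝ (Fin d)) :
    Integrable (gaussDen σ m) :=
  Integrable.of_integral_ne_zero (by rw [integral_gaussDen hσ]; exact one_ne_zero)

lemma gaussDen_mul_exp_inner {σ : ℝ} (hσ : σ ≠ 0) (m v x : EuclideanSpace ℝ (Fin d)) :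
    gaussDen σ m x * exp ⟪x, v⟫ =
      exp (⟪m, v⟫ + σ ^ 2 * ‖v‖ ^ 2 / 2) * gaussDen σ (m + σ ^ 2 • v) x := by
  have hnorm : ‖x - (m + σ ^ 2 • v)‖ ^ 2 =
      ‖x - m‖ ^ 2 - 2 * σ ^ 2 * ⟪x - m, v⟫ + σ ^ 4 * ‖v‖ ^ 2 := by
    rw [← sub_sub, norm_sub_sq_real, real_inner_smul_right, norm_smul, mul_pow, norm_pow,
      Real.norm_eq_abs, sq_abs]
    ring
  rw [gaussDen, gaussDen, hnorm, mul_assoc, ← exp_add, mul_left_comm, ← exp_add, inner_sub_left]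
  congr 2
  field_simp
  ring

lemma integrable_gaussDen_mul_exp_inner {σ : ℝ} (hσ : σ ≠ 0) (m v : EuclideanSpace ℝ (Fin d)) :
    Integrable (fun x => gaussDen σ m x * exp ⟪x, v⟫) := by
  simp_rw [gaussDen_mul_exp_inner hσ]
  exact (integrable_gaussDen hσ _).const_mul _

lemma mixDen_eq {σ : ℝ} (hσ : σ ≠ 0) (μ x : EuclideanSpace ℝ (Fin d)) :
    mixDen σ μ x = exp (-‖μ‖ ^ 2 / (8 * σ ^ 2)) * gaussDen σ 0 x * cosh ⟪x, (2 * σ ^ 2)⁻¹ • μ⟫ := by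
  set w := (2 * σ ^ 2)⁻¹ • μ
  have hcomp (v : EuclideanSpace ℝ (Fin d)) (hv : ‖v‖ = ‖w‖) :
      gaussDen σ (σ ^ 2 • v) x = exp (-‖μ‖ ^ 2 / (8 * σ ^ 2)) * (gaussDen σ 0 x * exp ⟪x, v⟫) := by
    rw [gaussDen_mul_exp_inner hσ, inner_zero_left, zero_add, zero_add, ← mul_assoc, ← exp_add, hv,
      norm_smul, norm_inv, Real.norm_eq_abs, abs_of_pos (by positivity : (0 : ℝ) < 2 * σ ^ 2)]
    convert (one_mul _).symm using 2
    rw [exp_eq_one_iff]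
    field_simp
    ring
  have hhalf : σ ^ 2 • w = (1 / 2 : ℝ) • μ := by
    rw [smul_smul]; congr 1; field_simp
  rw [mixDen, ← hhalf, ← smul_neg, hcomp w rfl, hcomp (-w) (norm_neg w), inner_neg_right, cosh_eq]
  ring

lemma integrable_gaussDen_mul_logCosh {σ : ℝ} (hσ : σ ≠ 0) (m w : EuclideanSpace ℝ (Fin d))
    (a : ℝ) : Integrable (fun x => gaussDen σ m x * logCosh (⟪x, w⟫ + a)) := by
  refine ((((integrable_gaussDen_mul_exp_inner hσ m w).const_mul (exp a)).add
    ((integrable_gaussDen_mul_exp_inner hσ m (-w)).const_mul (exp (-a)))).div_const 2).mono'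
    (by unfold gaussDen logCosh; fun_prop) (ae_of_all _ fun x => ?_)
  have hg := (gaussDen_pos hσ m x).le
  calc ‖gaussDen σ m x * logCosh (⟪x, w⟫ + a)‖ ≤ gaussDen σ m x * cosh (⟪x, w⟫ + a) := by
        rw [norm_mul, Real.norm_of_nonneg hg, Real.norm_of_nonneg (logCosh_nonneg _)]
        exact mul_le_mul_of_nonneg_left (logCosh_le_cosh _) hg
    _ = _ := by
        simp only [Pi.add_apply, inner_neg_right, cosh_eq, neg_add, exp_add]
        ring

lemma integral_gaussDen_mul_logCosh (σ : ℝ) (m w : EuclideanSpace ℝ (Fin d)) :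
    ∫ x, gaussDen σ m x * logCosh ⟪x, w⟫ = ∫ y, gaussDen σ 0 y * logCosh (⟪y, w⟫ + ⟪m, w⟫) := by
  rw [← integral_add_right_eq_self _ m]
  simp only [gaussDen_eq_gaussDen_zero σ m, add_sub_cancel_right, inner_add_left]

lemma integral_gaussDen_zero_mul_logCosh_eq_of_norm_eq (σ a : ℝ) {v w : EuclideanSpace ℝ (Fin d)}
    (h : ‖v‖ = ‖w‖) :
    ∫ y, gaussDen σ 0 y * logCosh (⟪y, v⟫ + a) = ∫ y, gaussDen σ 0 y * logCosh (⟪y, w⟫ + a) := by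
  simpa only [gaussDen, sub_zero] using integral_comp_norm_inner_eq_of_norm_eq
    (fun r t => (2 * π * σ ^ 2) ^ (-(d : ℝ) / 2) * exp (-r ^ 2 / (2 * σ ^ 2)) * logCosh (t + a)) h

lemma integral_gaussDen_zero_mul_logCosh_le {σ : ℝ} (hσ : σ ≠ 0) (w : EuclideanSpace ℝ (Fin d))
    {α β : ℝ} (h : |β| ≤ |α|) :
    (∫ y, gaussDen σ 0 y * logCosh (⟪y, w⟫ + α)) + (∫ y, gaussDen σ 0 y * logCosh (⟪y, w⟫ - α))
      - ((∫ y, gaussDen σ 0 y * logCosh (⟪y, w⟫ + β))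
        + ∫ y, gaussDen σ 0 y * logCosh (⟪y, w⟫ - β)) ≤ α ^ 2 - β ^ 2 := by
  have hint (a : ℝ) := integrable_gaussDen_mul_logCosh hσ 0 w a
  have hpair (a : ℝ) : Integrable (fun y => gaussDen σ 0 y * logCosh (⟪y, w⟫ + a)
      + gaussDen σ 0 y * logCosh (⟪y, w⟫ + -a)) := (hint a).add (hint (-a))
  simp only [sub_eq_add_neg (inner ℝ _ w)]
  rw [← integral_add (hint α) (hint (-α)), ← integral_add (hint β) (hint (-β)),
    ← integral_sub (hpair α) (hpair β)]
  calc _ ≤ ∫ y, gaussDen σ 0 y * (α ^ 2 - β ^ 2) :=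
        integral_mono ((hpair α).sub (hpair β)) ((integrable_gaussDen hσ 0).mul_const _) fun y => by
          have := mul_le_mul_of_nonneg_left (logCosh_add_add_logCosh_sub_le ⟪y, w⟫ h)
            (gaussDen_pos hσ 0 y).le
          simp only [Pi.sub_apply, ← sub_eq_add_neg]
          linarith
    _ = α ^ 2 - β ^ 2 := by rw [integral_mul_const, integral_gaussDen hσ, one_mul]

lemma log_mixDen_div_mixDen {σ : ℝ} (hσ : σ ≠ 0) {μ μ' : EuclideanSpace ℝ (Fin d)}
    (h : ‖μ‖ = ‖μ'‖) (x : EuclideanSpace ℝ (Fin d)) :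
    log (mixDen σ μ x / mixDen σ μ' x) =
      logCosh ⟪x, (2 * σ ^ 2)⁻¹ • μ⟫ - logCosh ⟪x, (2 * σ ^ 2)⁻¹ • μ'⟫ := by
  rw [mixDen_eq hσ, mixDen_eq hσ, ← h,
    mul_div_mul_left _ _ (mul_pos (exp_pos _) (gaussDen_pos hσ 0 x)).ne',
    log_div (cosh_pos _).ne' (cosh_pos _).ne', logCosh, logCosh]

theorem integral_mixDen_mul_log_div_le {σ : ℝ} (hσ : σ ≠ 0) {μ μ' : EuclideanSpace ℝ (Fin d)}
    (h : ‖μ‖ = ‖μ'‖) :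
    ∫ x, mixDen σ μ x * log (mixDen σ μ x / mixDen σ μ' x) ≤
      ((‖μ‖ ^ 2 / (4 * σ ^ 2)) ^ 2 - (⟪μ, μ'⟫ / (4 * σ ^ 2)) ^ 2) / 2 := by
  set w := (2 * σ ^ 2)⁻¹ • μ
  set w' := (2 * σ ^ 2)⁻¹ • μ'
  have hw : ‖w'‖ = ‖w‖ := by simp only [w, w', norm_smul, h]
  have hint (m v : EuclideanSpace ℝ (Fin d)) :
      Integrable (fun x => gaussDen σ m x * logCosh ⟪x, v⟫) := by
    simpa using integrable_gaussDen_mul_logCosh hσ m v 0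
  have hcomponent (m v : EuclideanSpace ℝ (Fin d)) (hv : ‖v‖ = ‖w‖) :
      ∫ x, gaussDen σ m x * logCosh ⟪x, v⟫ = ∫ y, gaussDen σ 0 y * logCosh (⟪y, w⟫ + ⟪m, v⟫) := by
    rw [integral_gaussDen_mul_logCosh, integral_gaussDen_zero_mul_logCosh_eq_of_norm_eq σ _ hv]
  have hsplit : (fun x => mixDen σ μ x * log (mixDen σ μ x / mixDen σ μ' x)) = fun x =>
      ((gaussDen σ (-((1 / 2 : ℝ) • μ)) x * logCosh ⟪x, w⟫
        - gaussDen σ (-((1 / 2 : ℝ) • μ)) x * logCosh ⟪x, w'⟫)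
      + (gaussDen σ ((1 / 2 : ℝ) • μ) x * logCosh ⟪x, w⟫
        - gaussDen σ ((1 / 2 : ℝ) • μ) x * logCosh ⟪x, w'⟫)) / 2 := by
    funext x
    rw [log_mixDen_div_mixDen hσ h, mixDen]
    ring
  have hα : ⟪(1 / 2 : ℝ) • μ, w⟫ = ‖μ‖ ^ 2 / (4 * σ ^ 2) := by
    rw [inner_half_smul_inv_smul, real_inner_self_eq_norm_sq]
  have hγ : ⟪(1 / 2 : ℝ) • μ, w'⟫ = ⟪μ, μ'⟫ / (4 * σ ^ 2) := inner_half_smul_inv_smul σ μ μ'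
  have hγα : |⟪μ, μ'⟫ / (4 * σ ^ 2)| ≤ |‖μ‖ ^ 2 / (4 * σ ^ 2)| := by
    rw [abs_div, abs_div, abs_of_nonneg (sq_nonneg ‖μ‖)]
    gcongr
    exact abs_inner_le_norm_sq_of_norm_eq h
  have hdiff (m : EuclideanSpace ℝ (Fin d)) : Integrable (fun x =>
      gaussDen σ m x * logCosh ⟪x, w⟫ - gaussDen σ m x * logCosh ⟪x, w'⟫) :=
    (hint m w).sub (hint m w')
  rw [hsplit, integral_div, integral_add (hdiff _) (hdiff _),
    integral_sub (hint _ _) (hint _ _), integral_sub (hint _ _) (hint _ _), hcomponent _ _ rfl,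
    hcomponent _ _ rfl, hcomponent _ _ hw, hcomponent _ _ hw]
  simp only [inner_neg_left, hα, hγ, ← sub_eq_add_neg]
  linarith [integral_gaussDen_zero_mul_logCosh_le hσ w hγα]

/-- KL bound between two symmetric isotropic Gaussian mixtures with rotated means:
`KL(P_θ, P_{θ'}) ≤ ξ⁴ (1 - cos β)` with `ξ = ‖μ‖/(2σ)` and
`cos β = |⟪μ, μ'⟫| / ‖μ‖²`. -/
theorem kl_mixture_le (σ : ℝ) (hσ : 0 < σ) (μ μ' : EuclideanSpace ℝ (Fin d))
    (hnorm : ‖μ‖ = ‖μ'‖) :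
    (∫ x : EuclideanSpace ℝ (Fin d),
        mixDen σ μ x * Real.log (mixDen σ μ x / mixDen σ μ' x))
      ≤ (‖μ‖ / (2 * σ)) ^ 4 * (1 - |(inner ℝ μ μ' : ℝ)| / ‖μ‖ ^ 2) := by
  refine (integral_mixDen_mul_log_div_le hσ.ne' hnorm).trans ?_
  have hp := abs_inner_le_norm_sq_of_norm_eq hnorm
  rcases eq_or_ne ‖μ‖ 0 with hμ | hμ
  · have : ⟪μ, μ'⟫ = 0 := abs_nonpos_iff.1 (by simpa [hμ] using hp)
    simp [hμ, this]
  · have hξ : 0 ≤ (‖μ‖ / (2 * σ)) ^ 4 := by positivity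
    have hgap : (‖μ‖ / (2 * σ)) ^ 4 * (1 - |⟪μ, μ'⟫| / ‖μ‖ ^ 2)
        - ((‖μ‖ ^ 2 / (4 * σ ^ 2)) ^ 2 - (⟪μ, μ'⟫ / (4 * σ ^ 2)) ^ 2) / 2
        = (‖μ‖ / (2 * σ)) ^ 4 * (1 - |⟪μ, μ'⟫| / ‖μ‖ ^ 2) ^ 2 / 2 := by
      rw [div_pow ⟪μ, μ'⟫, ← sq_abs ⟪μ, μ'⟫]
      field_simp
      ring
    linarith [mul_nonneg hξ (sq_nonneg (1 - |⟪μ, μ'⟫| / ‖μ‖ ^ 2))]
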